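/- arXiv:1708.04843 — 2 statements merged into one kernel-verified Lean document; each statement's English description precedes it below -/
import Mathlib

section
/- Let a < b be real numbers and let ρ, γ, ω, μ be real parameters with ρ > 0, γ > 0 and 2 < μ ≤ 3. Assume that E_{ρ,μ}^{γ}(ω u^{ρ}) > 0 and E_{ρ,μ−1}^{γ}(ω u^{ρ}) > 0 for every u ∈ [0, b−a], and that for all a ≤ s ≤ t ≤ b one has E_{ρ,μ}^{γ}(ω(t−a)^{ρ})·E_{ρ,μ−1}^{γ}(ω(b−s)^{ρ}) ≥ E_{ρ,μ−1}^{γ}(ω(b−a)^{ρ})·E_{ρ,μ}^{γ}(ω(t−s)^{ρ}). Then the Green's function satisfies G(t,s) ≥ 0 for all (t,s) ∈ [a,b]×[a,b]. -/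
/-- The three-parameter (Prabhakar) Mittag-Leffler function
`E_{ρ,μ}^{γ}(z) = ∑_{k=0}^∞ (γ)_k z^k / (Γ(ρk+μ) k!)`,
where `(γ)_k = γ(γ+1)⋯(γ+k−1)` is the Pochhammer symbol. -/
noncomputable def mlE (ρ μ γ z : ℝ) : ℝ :=
  ∑' k : ℕ, (∏ i ∈ Finset.range k, (γ + i)) * z ^ k /
    (Real.Gamma (ρ * k + μ) * (Nat.factorial k))

/-- The Green's function of the nonlocal Prabhakar fractional boundary value problem. -/
noncomputable def greenG (a b ρ μ ω γ : ℝ) (t s : ℝ) : ℝ :=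
  if s ≤ t then
    (t - a) ^ (μ - 1) * mlE ρ μ γ (ω * (t - a) ^ ρ) *
        ((b - s) ^ (μ - 2) * mlE ρ (μ - 1) γ (ω * (b - s) ^ ρ)) /
      ((b - a) ^ (μ - 2) * mlE ρ (μ - 1) γ (ω * (b - a) ^ ρ)) -
      (t - s) ^ (μ - 1) * mlE ρ μ γ (ω * (t - s) ^ ρ)
  else
    (t - a) ^ (μ - 1) * mlE ρ μ γ (ω * (t - a) ^ ρ) *
        ((b - s) ^ (μ - 2) * mlE ρ (μ - 1) γ (ω * (b - s) ^ ρ)) /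
      ((b - a) ^ (μ - 2) * mlE ρ (μ - 1) γ (ω * (b - a) ^ ρ))

/-- **Nonnegativity of the Green's function.** -/
theorem greenG_nonneg (a b ρ γ ω μ : ℝ) (hab : a < b) (hρ : 0 < ρ) (hγ : 0 < γ)
    (hμ1 : 2 < μ) (hμ2 : μ ≤ 3)
    (hpos1 : ∀ u ∈ Set.Icc (0 : ℝ) (b - a), 0 < mlE ρ μ γ (ω * u ^ ρ))
    (hpos2 : ∀ u ∈ Set.Icc (0 : ℝ) (b - a), 0 < mlE ρ (μ - 1) γ (ω * u ^ ρ))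
    (hML : ∀ s t : ℝ, a ≤ s → s ≤ t → t ≤ b →
      mlE ρ μ γ (ω * (t - a) ^ ρ) * mlE ρ (μ - 1) γ (ω * (b - s) ^ ρ) ≥
        mlE ρ (μ - 1) γ (ω * (b - a) ^ ρ) * mlE ρ μ γ (ω * (t - s) ^ ρ)) :
    ∀ t ∈ Set.Icc a b, ∀ s ∈ Set.Icc a b, 0 ≤ greenG a b ρ μ ω γ t s := by
  intro t ht s hs
  obtain ⟨hat, htb⟩ := ht
  obtain ⟨has, hsb⟩ := hs
  have hba : (0:ℝ) < b - a := by linarith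
  have hEc : 0 < mlE ρ (μ-1) γ (ω * (b-a)^ρ) := hpos2 (b-a) ⟨hba.le, le_refl _⟩
  have hCpos : 0 < (b-a)^(μ-2) * mlE ρ (μ-1) γ (ω*(b-a)^ρ) :=
    mul_pos (Real.rpow_pos_of_pos hba _) hEc
  have hta : 0 ≤ t - a := by linarith
  have hbs : 0 ≤ b - s := by linarith
  have hEa : 0 < mlE ρ μ γ (ω*(t-a)^ρ) := hpos1 _ ⟨hta, by linarith⟩
  have hEb : 0 < mlE ρ (μ-1) γ (ω*(b-s)^ρ) := hpos2 _ ⟨hbs, by linarith⟩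
  unfold greenG
  split_ifs with hst
  · -- s ≤ t
    have hts : 0 ≤ t - s := by linarith
    have hEd : 0 < mlE ρ μ γ (ω*(t-s)^ρ) := hpos1 _ ⟨hts, by linarith⟩
    have hml := hML s t has hst htb
    have hμ2' : (0:ℝ) ≤ μ - 2 := by linarith
    have hpw : (t-s)^(μ-1) * (b-a)^(μ-2) ≤ (t-a)^(μ-1) * (b-s)^(μ-2) := by
      rcases eq_or_lt_of_le hts with h | h
      · rw [← h, Real.zero_rpow (by linarith : μ - 1 ≠ 0), zero_mul]
        exact mul_nonneg (Real.rpow_nonneg hta _) (Real.rpow_nonneg hbs _)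
      · have hX : (0:ℝ) < t - a := by linarith
        have hμ1' : μ - 1 = 1 + (μ - 2) := by ring
        rw [hμ1', Real.rpow_add h, Real.rpow_add hX, Real.rpow_one, Real.rpow_one,
          mul_assoc, mul_assoc, ← Real.mul_rpow hts hba.le, ← Real.mul_rpow hta hbs]
        have h1 : (t-s)*(b-a) ≤ (t-a)*(b-s) := by nlinarith
        exact mul_le_mul (by linarith) (Real.rpow_le_rpow (by nlinarith) h1 hμ2')
          (Real.rpow_nonneg (by nlinarith) _) hX.le
    rw [sub_nonneg, le_div_iff₀ hCpos]
    have key2 : (t-s)^(μ-1) * (b-a)^(μ-2) *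
        (mlE ρ (μ-1) γ (ω*(b-a)^ρ) * mlE ρ μ γ (ω*(t-s)^ρ)) ≤
        (t-a)^(μ-1) * (b-s)^(μ-2) *
        (mlE ρ μ γ (ω*(t-a)^ρ) * mlE ρ (μ-1) γ (ω*(b-s)^ρ)) := by
      exact mul_le_mul hpw hml (mul_pos hEc hEd).le
        (mul_nonneg (Real.rpow_nonneg hta _) (Real.rpow_nonneg hbs _))
    nlinarith [key2]
  · exact div_nonneg (mul_nonneg (mul_nonneg (Real.rpow_nonneg hta _) hEa.le)
      (mul_nonneg (Real.rpow_nonneg hbs _) hEb.le)) hCpos.le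
end

section
/- Let a < b be real numbers and let μ be a real number with 2 < μ ≤ 3. Then for all real s, t with a ≤ s ≤ t ≤ b, one has (t−a)^{μ−1}·(b−s)^{μ−2} ≥ (b−a)^{μ−2}·(t−s)^{μ−1}. -/
/-- **Power-function inequality (i).**
For `2 < μ ≤ 3` and `a ≤ s ≤ t ≤ b`, one has
`(t−a)^(μ−1) · (b−s)^(μ−2) ≥ (b−a)^(μ−2) · (t−s)^(μ−1)`,
where `^` denotes the real (rpow) power. -/
theorem power_inequality_green (a b μ : ℝ) (hab : a < b) (hμ1 : 2 < μ) (hμ2 : μ ≤ 3) :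
    ∀ s t : ℝ, a ≤ s → s ≤ t → t ≤ b →
      (t - a) ^ (μ - 1) * (b - s) ^ (μ - 2) ≥ (b - a) ^ (μ - 2) * (t - s) ^ (μ - 1) := by
  intro s t hs hst htb
  rcases eq_or_lt_of_le hst with heq | hlt
  · subst heq
    rw [sub_self, Real.zero_rpow (by linarith), mul_zero]
    exact mul_nonneg (Real.rpow_nonneg (by linarith) _) (Real.rpow_nonneg (by linarith) _)
  · have hts : (0:ℝ) < t - s := by linarith
    have hta : (0:ℝ) < t - a := by linarith
    have hba : (0:ℝ) < b - a := by linarith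
    have hbs : (0:ℝ) < b - s := by linarith
    have hexp : (0:ℝ) ≤ μ - 2 := by linarith
    have key : (b - a) * (t - s) ≤ (t - a) * (b - s) := by nlinarith
    have hpow : ((b - a) * (t - s)) ^ (μ - 2) ≤ ((t - a) * (b - s)) ^ (μ - 2) :=
      Real.rpow_le_rpow (by positivity) key hexp
    rw [Real.mul_rpow hba.le hts.le, Real.mul_rpow hta.le hbs.le] at hpow
    have h1 : (t - a) ^ (μ - 1) = (t - a) ^ (μ - 2) * (t - a) := by
      rw [show μ - 1 = (μ - 2) + 1 by ring, Real.rpow_add hta, Real.rpow_one]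
    have h2 : (t - s) ^ (μ - 1) = (t - s) ^ (μ - 2) * (t - s) := by
      rw [show μ - 1 = (μ - 2) + 1 by ring, Real.rpow_add hts, Real.rpow_one]
    rw [h1, h2]
    have : (b - a) ^ (μ - 2) * (t - s) ^ (μ - 2) * (t - s) ≤
        (t - a) ^ (μ - 2) * (b - s) ^ (μ - 2) * (t - a) :=
      mul_le_mul hpow (by linarith) hts.le (by positivity)
    nlinarith [Real.rpow_nonneg hbs.le (μ - 2), Real.rpow_nonneg hta.le (μ - 2)]
end
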